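/- arXiv:2009.11430 — 3 statements merged into one kernel-verified Lean document; each statement's English description precedes it below -/
import Mathlib

section
/- Let θ > 0, u₁ > 0, u₂ > 0, a₂ > 0 and 0 < α < 1 be real numbers, and suppose M₂₀, M₁₁, M₀₂ are real numbers satisfying the second-moment system (E21)–(E23) together with the reversibility equation (S1): (u₁ − u₂)M₁₁ − u₁M₂₀ + u₂M₀₂ = 0. Then u₁ = u₂. (Necessity of equal migration rates for reversibility of the generalized stepping stone model; step of Theorem 5.2.) -/
/-- If the second moments satisfy the system (E21)–(E23) together with the
reversibility equation (S1), then the migration rates must be equal: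
necessity of `u₁ = u₂` for reversibility of the generalized stepping stone
model with Ξ-resampling mechanism. -/
theorem reversibility_requires_equal_migration_rates
    (θ u₁ u₂ a₂ α M₂₀ M₁₁ M₀₂ : ℝ)
    (hθ : 0 < θ) (hu₁ : 0 < u₁) (hu₂ : 0 < u₂) (ha₂ : 0 < a₂)
    (hα₀ : 0 < α) (hα₁ : α < 1)
    (hE21 : (θ + 2 * u₂ + a₂) * M₂₀ - 2 * u₂ * M₁₁ = θ * α ^ 2 + a₂ * α)
    (hE22 : -2 * u₁ * M₁₁ + (θ + 2 * u₁ + a₂) * M₀₂ = θ * α ^ 2 + a₂ * α)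
    (hE23 : -u₁ * M₂₀ + (θ + u₁ + u₂) * M₁₁ - u₂ * M₀₂ = θ * α ^ 2)
    (hS1 : (u₁ - u₂) * M₁₁ - u₁ * M₂₀ + u₂ * M₀₂ = 0) :
    u₁ = u₂ := by
  have key : (u₁ - u₂) * (θ * a₂ * α * (1 - α) * (θ + a₂ + 2 * u₁ + 2 * u₂)) = 0 := by
    linear_combination
      (-(u₂ * a₂ ^ 2) - 2 * u₂ ^ 2 * a₂ - u₁ * a₂ ^ 2 - 2 * u₁ ^ 2 * a₂ - θ * a₂ ^ 2
        - 4 * θ * u₂ * a₂ - 2 * θ * u₂ ^ 2 - 4 * θ * u₁ * a₂ - 4 * θ * u₁ * u₂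
        - 2 * θ * u₁ ^ 2 - 2 * θ ^ 2 * a₂ - 3 * θ ^ 2 * u₂ - 3 * θ ^ 2 * u₁ - θ ^ 3) * hS1
      - (2 * u₁ * u₂ * a₂ + θ * u₁ * a₂ + 2 * θ * u₁ * u₂ + 2 * θ * u₁ ^ 2 + θ ^ 2 * u₁) * hE21
      - (-2 * u₁ * u₂ * a₂ - θ * u₂ * a₂ - 2 * θ * u₂ ^ 2 - 2 * θ * u₁ * u₂ - θ ^ 2 * u₂) * hE22
      - (u₂ * a₂ ^ 2 + 2 * u₂ ^ 2 * a₂ - u₁ * a₂ ^ 2 - 2 * u₁ ^ 2 * a₂ + 2 * θ * u₂ * a₂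
        + 2 * θ * u₂ ^ 2 - 2 * θ * u₁ * a₂ - 2 * θ * u₁ ^ 2 + θ ^ 2 * u₂ - θ ^ 2 * u₁) * hE23
  have hQ : 0 < θ * a₂ * α * (1 - α) * (θ + a₂ + 2 * u₁ + 2 * u₂) :=
    mul_pos (mul_pos (mul_pos (mul_pos hθ ha₂) hα₀) (by linarith)) (by linarith)
  have := mul_eq_zero.mp key
  rcases this with h | h
  · linarith
  · exact absurd h (ne_of_gt hQ)
end

section
/- Let θ > 0, u > 0, a₂₁ ≥ 0, a₃ ≥ 0 be real numbers with a₂ := a₂₁ + a₃ > 0, and let 0 < α < 1. Suppose real numbers M₂₀, M₁₁, M₀₂ satisfy the second-moment system (E21)–(E23) with u₁ = u₂ = u, real numbers M₃₀, M₂₁, M₁₂, M₀₃ satisfy the third-moment system (E31)–(E34) with u₁ = u₂ = u, and additionally the reversibility equation (T1) holds: (αθ + a₂)M₁₁ − (θα/2)M₂₀ − (u + a₂ + θ/2)M₂₁ − uM₃₀ + 2uM₁₂ = 0. Then α = 1/2. (Necessity of α = 1/2 for reversibility of the generalized stepping stone model; step of Theorem 5.2.) -/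
set_option maxHeartbeats 4000000 in
/-- If the second- and third-moment systems (with equal migration rates
`u₁ = u₂ = u`) hold together with the reversibility equation (T1), then
necessarily `α = 1/2`: a step in the irreversibility proof for the
generalized stepping stone model with Ξ-resampling mechanism. -/
theorem reversibility_requires_alpha_half
    (θ u a₂₁ a₃ a₂ α M₂₀ M₁₁ M₀₂ M₃₀ M₂₁ M₁₂ M₀₃ : ℝ)
    (hθ : 0 < θ) (hu : 0 < u) (ha₂₁ : 0 ≤ a₂₁) (ha₃ : 0 ≤ a₃)
    (ha₂def : a₂ = a₂₁ + a₃) (ha₂ : 0 < a₂)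
    (hα₀ : 0 < α) (hα₁ : α < 1)
    (hE21 : (θ + 2 * u + a₂) * M₂₀ - 2 * u * M₁₁ = θ * α ^ 2 + a₂ * α)
    (hE22 : -2 * u * M₁₁ + (θ + 2 * u + a₂) * M₀₂ = θ * α ^ 2 + a₂ * α)
    (hE23 : -u * M₂₀ + (θ + u + u) * M₁₁ - u * M₀₂ = θ * α ^ 2)
    (hE31 : (3 * a₂₁ + a₃ + (3 / 2) * θ + 3 * u) * M₃₀ - 3 * u * M₂₁ =
      (3 * a₂₁ + (3 / 2) * α * θ) * M₂₀ + a₃ * α)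
    (hE32 : -u * M₃₀ + (a₂ + (3 / 2) * θ + 2 * u + u) * M₂₁ - 2 * u * M₁₂ =
      (α * θ + a₂) * M₁₁ + (θ * α / 2) * M₂₀)
    (hE33 : -2 * u * M₂₁ + (a₂ + (3 / 2) * θ + u + 2 * u) * M₁₂ - u * M₀₃ =
      (α * θ + a₂) * M₁₁ + (θ * α / 2) * M₀₂)
    (hE34 : -3 * u * M₁₂ + (3 * a₂₁ + a₃ + (3 / 2) * θ + 3 * u) * M₀₃ =
      (3 * a₂₁ + (3 / 2) * α * θ) * M₀₂ + a₃ * α)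
    (hT1 : (α * θ + a₂) * M₁₁ - (θ * α / 2) * M₂₀
      - (u + a₂ + θ / 2) * M₂₁ - u * M₃₀ + 2 * u * M₁₂ = 0) :
    α = 1 / 2 := by
  subst ha₂def
  have hRpos : (0:ℝ) < ((1)*θ^2*u*a₃^5 + (9)*θ^2*u*a₂₁*a₃^4 + (30)*θ^2*u*a₂₁^2*a₃^3 + (46)*θ^2*u*a₂₁^3*a₃^2 + (33)*θ^2*u*a₂₁^4*a₃ + (9)*θ^2*u*a₂₁^5 + (18)*θ^2*u^2*a₃^4 + (114)*θ^2*u^2*a₂₁*a₃^3 + (246)*θ^2*u^2*a₂₁^2*a₃^2 + (222)*θ^2*u^2*a₂₁^3*a₃ + (72)*θ^2*u^2*a₂₁^4 + (108)*θ^2*u^3*a₃^3 + (432)*θ^2*u^3*a₂₁*a₃^2 + (468)*θ^2*u^3*a₂₁^2*a₃ + (144)*θ^2*u^3*a₂₁^3 + (248)*θ^2*u^4*a₃^2 + (480)*θ^2*u^4*a₂₁*a₃ + (72)*θ^2*u^4*a₂₁^2 + (192)*θ^2*u^5*a₃ + (6)*θ^3*u*a₃^4 + (39)*θ^3*u*a₂₁*a₃^3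 + (87)*θ^3*u*a₂₁^2*a₃^2 + (81)*θ^3*u*a₂₁^3*a₃ + (27)*θ^3*u*a₂₁^4 + (78)*θ^3*u^2*a₃^3 + (318)*θ^3*u^2*a₂₁*a₃^2 + (366)*θ^3*u^2*a₂₁^2*a₃ + (126)*θ^3*u^2*a₂₁^3 + (300)*θ^3*u^3*a₃^2 + (576)*θ^3*u^3*a₂₁*a₃ + (108)*θ^3*u^3*a₂₁^2 + (336)*θ^3*u^4*a₃ + (53/4)*θ^4*u*a₃^3 + (221/4)*θ^4*u*a₂₁*a₃^2 + (267/4)*θ^4*u*a₂₁^2*a₃ + (99/4)*θ^4*u*a₂₁^3 + (221/2)*θ^4*u^2*a₃^2 + (216)*θ^4*u^2*a₂₁*a₃ + (99/2)*θ^4*u^2*a₂₁^2 + (204)*θ^4*u^3*a₃ + (51/4)*θ^5*u*a₃^2 + (51/2)*θ^5*u*a₂₁*a₃ + (27/4)*θ^5*u*a₂₁^2 + (51)*θ^5*u^2*a₃ + (9/2)*θ^6*u*a₃) := by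
    rcases ha₂₁.eq_or_lt with hb | hb
    · have hc : 0 < a₃ := by linarith
      rw [← hb]
      positivity
    · positivity
  have hkey : (2*α - 1) * ((α * (1 - α)) * ((1)*θ^2*u*a₃^5 + (9)*θ^2*u*a₂₁*a₃^4 + (30)*θ^2*u*a₂₁^2*a₃^3 + (46)*θ^2*u*a₂₁^3*a₃^2 + (33)*θ^2*u*a₂₁^4*a₃ + (9)*θ^2*u*a₂₁^5 + (18)*θ^2*u^2*a₃^4 + (114)*θ^2*u^2*a₂₁*a₃^3 + (246)*θ^2*u^2*a₂₁^2*a₃^2 + (222)*θ^2*u^2*a₂₁^3*a₃ + (72)*θ^2*u^2*a₂₁^4 + (108)*θ^2*u^3*a₃^3 + (432)*θ^2*u^3*a₂₁*a₃^2 + (468)*θ^2*u^3*a₂₁^2*a₃ + (144)*θ^2*u^3*a₂₁^3 + (248)*θ^2*u^4*a₃^2 + (480)*θ^2*u^4*a₂₁*a₃ + (72)*θ^2*u^4*a₂₁^2 + (192)*θ^2*u^5*a₃ + (6)*θ^3*u*a₃^4 + (39)*θ^3*u*a₂₁*a₃^3 + (87)*θ^3*u*a₂₁^2*a₃^2 +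 (81)*θ^3*u*a₂₁^3*a₃ + (27)*θ^3*u*a₂₁^4 + (78)*θ^3*u^2*a₃^3 + (318)*θ^3*u^2*a₂₁*a₃^2 + (366)*θ^3*u^2*a₂₁^2*a₃ + (126)*θ^3*u^2*a₂₁^3 + (300)*θ^3*u^3*a₃^2 + (576)*θ^3*u^3*a₂₁*a₃ + (108)*θ^3*u^3*a₂₁^2 + (336)*θ^3*u^4*a₃ + (53/4)*θ^4*u*a₃^3 + (221/4)*θ^4*u*a₂₁*a₃^2 + (267/4)*θ^4*u*a₂₁^2*a₃ + (99/4)*θ^4*u*a₂₁^3 + (221/2)*θ^4*u^2*a₃^2 + (216)*θ^4*u^2*a₂₁*a₃ + (99/2)*θ^4*u^2*a₂₁^2 + (204)*θ^4*u^3*a₃ + (51/4)*θ^5*u*a₃^2 + (51/2)*θ^5*u*a₂₁*a₃ + (27/4)*θ^5*u*a₂₁^2 + (51)*θ^5*u^2*a₃ + (9/2)*θ^6*u*a₃)) = 0 := by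
    linear_combination
      ((-2)*u^2*a₃^5 + (-6)*u^2*a₂₁*a₃^4 + (12)*u^2*a₂₁^2*a₃^3 + (52)*u^2*a₂₁^3*a₃^2 + (54)*u^2*a₂₁^4*a₃ + (18)*u^2*a₂₁^5 + (-20)*u^3*a₃^4 + (-40)*u^3*a₂₁*a₃^3 + (88)*u^3*a₂₁^2*a₃^2 + (216)*u^3*a₂₁^3*a₃ + (108)*u^3*a₂₁^4 + (-56)*u^4*a₃^3 + (-56)*u^4*a₂₁*a₃^2 + (144)*u^4*a₂₁^2*a₃ + (144)*u^4*a₂₁^3 + (-48)*u^5*a₃^2 + (-48)*u^5*a₂₁*a₃ + (-1)*θ*u*a₃^5 + (2)*θ*u*a₃^5*α + (-3)*θ*u*a₂₁*a₃^4 + (18)*θ*u*a₂₁*a₃^4*α + (6)*θ*u*a₂₁^2*a₃^3 + (60)*θ*u*a₂₁^2*a₃^3*α + (26)*θ*u*a₂₁^3*a₃^2 + (92)*θ*u*a₂₁^3*a₃^2*α + (27)*θ*u*a₂₁^4*a₃ + (66)*θ*u*a₂₁^4*a₃*α + (9)*θ*u*a₂₁^5 + (18)*θ*u*a₂₁^5*α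 + (-24)*θ*u^2*a₃^4 + (28)*θ*u^2*a₃^4*α + (-48)*θ*u^2*a₂₁*a₃^3 + (188)*θ*u^2*a₂₁*a₃^3*α + (120)*θ*u^2*a₂₁^2*a₃^2 + (436)*θ*u^2*a₂₁^2*a₃^2*α + (288)*θ*u^2*a₂₁^3*a₃ + (420)*θ*u^2*a₂₁^3*a₃*α + (144)*θ*u^2*a₂₁^4 + (144)*θ*u^2*a₂₁^4*α + (-140)*θ*u^3*a₃^3 + (132)*θ*u^3*a₃^3*α + (-140)*θ*u^3*a₂₁*a₃^2 + (588)*θ*u^3*a₂₁*a₃^2*α + (504)*θ*u^3*a₂₁^2*a₃ + (780)*θ*u^3*a₂₁^2*a₃*α + (504)*θ*u^3*a₂₁^3 + (324)*θ*u^3*a₂₁^3*α + (-264)*θ*u^4*a₃^2 + (232)*θ*u^4*a₃^2*α + (-48)*θ*u^4*a₂₁*a₃ + (528)*θ*u^4*a₂₁*a₃*α + (432)*θ*u^4*a₂₁^2 + (216)*θ*u^4*a₂₁^2*α + (-144)*θ*u^5*a₃ + (96)*θ*u^5*a₃*α + (1)*θ^2*a₃^5*α + (9)*θ^2*a₂₁*a₃^4*α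 + (30)*θ^2*a₂₁^2*a₃^3*α + (46)*θ^2*a₂₁^3*a₃^2*α + (33)*θ^2*a₂₁^4*a₃*α + (9)*θ^2*a₂₁^5*α + (-11/2)*θ^2*u*a₃^4 + (28)*θ^2*u*a₃^4*α + (-8)*θ^2*u*a₂₁*a₃^3 + (194)*θ^2*u*a₂₁*a₃^3*α + (41)*θ^2*u*a₂₁^2*a₃^2 + (466)*θ^2*u*a₂₁^2*a₃^2*α + (84)*θ^2*u*a₂₁^3*a₃ + (462)*θ^2*u*a₂₁^3*a₃*α + (81/2)*θ^2*u*a₂₁^4 + (162)*θ^2*u*a₂₁^4*α + (-151/2)*θ^2*u^2*a₃^3 + (219)*θ^2*u^2*a₃^3*α + (-79/2)*θ^2*u^2*a₂₁*a₃^2 + (1059)*θ^2*u^2*a₂₁*a₃^2*α + (783/2)*θ^2*u^2*a₂₁^2*a₃ + (1569)*θ^2*u^2*a₂₁^2*a₃*α + (711/2)*θ^2*u^2*a₂₁^3 + (729)*θ^2*u^2*a₂₁^3*α + (-267)*θ^2*u^3*a₃^2 + (634)*θ^2*u^3*a₃^2*α + (123)*θ^2*u^3*a₂₁*a₃ + (1782)*θ^2*u^3*a₂₁*a₃*α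 + (738)*θ^2*u^3*a₂₁^2 + (1116)*θ^2*u^3*a₂₁^2*α + (-252)*θ^2*u^4*a₃ + (588)*θ^2*u^4*a₃*α + (324)*θ^2*u^4*a₂₁ + (540)*θ^2*u^4*a₂₁*α + (13/2)*θ^3*a₃^4*α + (46)*θ^3*a₂₁*a₃^3*α + (113)*θ^3*a₂₁^2*a₃^2*α + (114)*θ^3*a₂₁^3*a₃*α + (81/2)*θ^3*a₂₁^4*α + (-45/4)*θ^3*u*a₃^3 + (110)*θ^3*u*a₃^3*α + (3/4)*θ^3*u*a₂₁*a₃^2 + (557)*θ^3*u*a₂₁*a₃^2*α + (309/4)*θ^3*u*a₂₁^2*a₃ + (870)*θ^3*u*a₂₁^2*a₃*α + (261/4)*θ^3*u*a₂₁^3 + (423)*θ^3*u*a₂₁^3*α + (-183/2)*θ^3*u^2*a₃^2 + (555)*θ^3*u^2*a₃^2*α + (93)*θ^3*u^2*a₂₁*a₃ + (1734)*θ^3*u^2*a₂₁*a₃*α + (657/2)*θ^3*u^2*a₂₁^2 + (1251)*θ^3*u^2*a₂₁^2*α + (-153)*θ^3*u^3*a₃ + (948)*θ^3*u^3*a₃*α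 + (306)*θ^3*u^3*a₂₁ + (1278)*θ^3*u^3*a₂₁*α + (360)*θ^3*u^4*α + (67/4)*θ^4*a₃^3*α + (349/4)*θ^4*a₂₁*a₃^2*α + (561/4)*θ^4*a₂₁^2*a₃*α + (279/4)*θ^4*a₂₁^3*α + (-81/8)*θ^4*u*a₃^2 + (375/2)*θ^4*u*a₃^2*α + (63/4)*θ^4*u*a₂₁*a₃ + (618)*θ^4*u*a₂₁*a₃*α + (351/8)*θ^4*u*a₂₁^2 + (945/2)*θ^4*u*a₂₁^2*α + (-153/4)*θ^4*u^2*a₃ + (2301/4)*θ^4*u^2*a₃*α + (387/4)*θ^4*u^2*a₂₁ + (3501/4)*θ^4*u^2*a₂₁*α + (450)*θ^4*u^3*α + (171/8)*θ^5*a₃^2*α + (291/4)*θ^5*a₂₁*a₃*α + (459/8)*θ^5*a₂₁^2*α + (-27/8)*θ^5*u*a₃ + (1179/8)*θ^5*u*a₃*α + (81/8)*θ^5*u*a₂₁ + (1899/8)*θ^5*u*a₂₁*α + (423/2)*θ^5*u^2*α + (27/2)*θ^6*a₃*α + (45/2)*θ^6*a₂₁*α + (351/8)*θ^6*u*α + (27/8)*θ^7*α)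 * hE21 +
      ((-2)*u^2*a₃^5 + (-18)*u^2*a₂₁*a₃^4 + (-60)*u^2*a₂₁^2*a₃^3 + (-92)*u^2*a₂₁^3*a₃^2 + (-66)*u^2*a₂₁^4*a₃ + (-18)*u^2*a₂₁^5 + (-20)*u^3*a₃^4 + (-136)*u^3*a₂₁*a₃^3 + (-320)*u^3*a₂₁^2*a₃^2 + (-312)*u^3*a₂₁^3*a₃ + (-108)*u^3*a₂₁^4 + (-56)*u^4*a₃^3 + (-248)*u^4*a₂₁*a₃^2 + (-336)*u^4*a₂₁^2*a₃ + (-144)*u^4*a₂₁^3 + (-48)*u^5*a₃^2 + (-48)*u^5*a₂₁*a₃ + (-1)*θ*u*a₃^5 + (-9)*θ*u*a₂₁*a₃^4 + (-30)*θ*u*a₂₁^2*a₃^3 + (-46)*θ*u*a₂₁^3*a₃^2 + (-33)*θ*u*a₂₁^4*a₃ + (-9)*θ*u*a₂₁^5 + (-24)*θ*u^2*a₃^4 + (-168)*θ*u^2*a₂₁*a₃^3 + (-408)*θ*u^2*a₂₁^2*a₃^2 + (-408)*θ*u^2*a₂₁^3*a₃ + (-144)*θ*u^2*a₂₁^4 +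 (-140)*θ*u^3*a₃^3 + (4)*θ*u^3*a₃^3*α + (-692)*θ*u^3*a₂₁*a₃^2 + (4)*θ*u^3*a₂₁*a₃^2*α + (-1056)*θ*u^3*a₂₁^2*a₃ + (-36)*θ*u^3*a₂₁^2*a₃*α + (-504)*θ*u^3*a₂₁^3 + (-36)*θ*u^3*a₂₁^3*α + (-264)*θ*u^4*a₃^2 + (40)*θ*u^4*a₃^2*α + (-720)*θ*u^4*a₂₁*a₃ + (48)*θ*u^4*a₂₁*a₃*α + (-432)*θ*u^4*a₂₁^2 + (-72)*θ*u^4*a₂₁^2*α + (-144)*θ*u^5*a₃ + (96)*θ*u^5*a₃*α + (-11/2)*θ^2*u*a₃^4 + (-1)*θ^2*u*a₃^4*α + (-38)*θ^2*u*a₂₁*a₃^3 + (-8)*θ^2*u*a₂₁*a₃^3*α + (-91)*θ^2*u*a₂₁^2*a₃^2 + (-22)*θ^2*u*a₂₁^2*a₃^2*α + (-90)*θ^2*u*a₂₁^3*a₃ + (-24)*θ^2*u*a₂₁^3*a₃*α + (-63/2)*θ^2*u*a₂₁^4 + (-9)*θ^2*u*a₂₁^4*α + (-151/2)*θ^2*u^2*a₃^3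 + (-17)*θ^2*u^2*a₃^3*α + (-757/2)*θ^2*u^2*a₂₁*a₃^2 + (-107)*θ^2*u^2*a₂₁*a₃^2*α + (-1173/2)*θ^2*u^2*a₂₁^2*a₃ + (-207)*θ^2*u^2*a₂₁^2*a₃*α + (-567/2)*θ^2*u^2*a₂₁^3 + (-117)*θ^2*u^2*a₂₁^3*α + (-267)*θ^2*u^3*a₃^2 + (-78)*θ^2*u^3*a₃^2*α + (-825)*θ^2*u^3*a₂₁*a₃ + (-378)*θ^2*u^3*a₂₁*a₃*α + (-594)*θ^2*u^3*a₂₁^2 + (-396)*θ^2*u^3*a₂₁^2*α + (-252)*θ^2*u^4*a₃ + (-84)*θ^2*u^4*a₃*α + (-252)*θ^2*u^4*a₂₁ + (-324)*θ^2*u^4*a₂₁*α + (-45/4)*θ^3*u*a₃^3 + (-13/2)*θ^3*u*a₃^3*α + (-219/4)*θ^3*u*a₂₁*a₃^2 + (-79/2)*θ^3*u*a₂₁*a₃^2*α + (-327/4)*θ^3*u*a₂₁^2*a₃ + (-147/2)*θ^3*u*a₂₁^2*a₃*α + (-153/4)*θ^3*u*a₂₁^3 + (-81/2)*θ^3*u*a₂₁^3*α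 + (-183/2)*θ^3*u^2*a₃^2 + (-80)*θ^3*u^2*a₃^2*α + (-282)*θ^3*u^2*a₂₁*a₃ + (-330)*θ^3*u^2*a₂₁*a₃*α + (-405/2)*θ^3*u^2*a₂₁^2 + (-306)*θ^3*u^2*a₂₁^2*α + (-153)*θ^3*u^3*a₃ + (-264)*θ^3*u^3*a₃*α + (-198)*θ^3*u^3*a₂₁ + (-558)*θ^3*u^3*a₂₁*α + (-216)*θ^3*u^4*α + (-81/8)*θ^4*u*a₃^2 + (-61/4)*θ^4*u*a₃^2*α + (-117/4)*θ^4*u*a₂₁*a₃ + (-123/2)*θ^4*u*a₂₁*a₃*α + (-153/8)*θ^4*u*a₂₁^2 + (-225/4)*θ^4*u*a₂₁^2*α + (-153/4)*θ^4*u^2*a₃ + (-483/4)*θ^4*u^2*a₃*α + (-189/4)*θ^4*u^2*a₂₁ + (-963/4)*θ^4*u^2*a₂₁*α + (-198)*θ^4*u^3*α + (-27/8)*θ^5*u*a₃ + (-123/8)*θ^5*u*a₃*α + (-27/8)*θ^5*u*a₂₁ + (-243/8)*θ^5*u*a₂₁*α + (-117/2)*θ^5*u^2*α + (-45/8)*θ^6*u*α)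 * hE22 +
      ((-2)*u*a₃^6 + (-20)*u*a₂₁*a₃^5 + (-78)*u*a₂₁^2*a₃^4 + (-152)*u*a₂₁^3*a₃^3 + (-158)*u*a₂₁^4*a₃^2 + (-84)*u*a₂₁^5*a₃ + (-18)*u*a₂₁^6 + (-24)*u^2*a₃^5 + (-192)*u^2*a₂₁*a₃^4 + (-576)*u^2*a₂₁^2*a₃^3 + (-816)*u^2*a₂₁^3*a₃^2 + (-552)*u^2*a₂₁^4*a₃ + (-144)*u^2*a₂₁^5 + (-96)*u^3*a₃^4 + (-552)*u^3*a₂₁*a₃^3 + (-1104)*u^3*a₂₁^2*a₃^2 + (-936)*u^3*a₂₁^3*a₃ + (-288)*u^3*a₂₁^4 + (-160)*u^4*a₃^3 + (-544)*u^4*a₂₁*a₃^2 + (-528)*u^4*a₂₁^2*a₃ + (-144)*u^4*a₂₁^3 + (-96)*u^5*a₃^2 + (-96)*u^5*a₂₁*a₃ + (-1)*θ*a₃^6 + (-10)*θ*a₂₁*a₃^5 + (-39)*θ*a₂₁^2*a₃^4 + (-76)*θ*a₂₁^3*a₃^3 + (-79)*θ*a₂₁^4*a₃^2 + (-42)*θ*a₂₁^5*a₃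 + (-9)*θ*a₂₁^6 + (-28)*θ*u*a₃^5 + (-228)*θ*u*a₂₁*a₃^4 + (-696)*θ*u*a₂₁^2*a₃^3 + (-1000)*θ*u*a₂₁^3*a₃^2 + (-684)*θ*u*a₂₁^4*a₃ + (-180)*θ*u*a₂₁^5 + (-208)*θ*u^2*a₃^4 + (8)*θ*u^2*a₃^4*α + (-1280)*θ*u^2*a₂₁*a₃^3 + (40)*θ*u^2*a₂₁*a₃^3*α + (-2764)*θ*u^2*a₂₁^2*a₃^2 + (56)*θ*u^2*a₂₁^2*a₃^2*α + (-2520)*θ*u^2*a₂₁^3*a₃ + (24)*θ*u^2*a₂₁^3*a₃*α + (-828)*θ*u^2*a₂₁^4 + (-600)*θ*u^3*a₃^3 + (80)*θ*u^3*a₃^3*α + (-2424)*θ*u^3*a₂₁*a₃^2 + (272)*θ*u^3*a₂₁*a₃^2*α + (-2976)*θ*u^3*a₂₁^2*a₃ + (192)*θ*u^3*a₂₁^2*a₃*α + (-1152)*θ*u^3*a₂₁^3 + (-720)*θ*u^4*a₃^2 + (224)*θ*u^4*a₃^2*α + (-1392)*θ*u^4*a₂₁*a₃ + (384)*θ*u^4*a₂₁*a₃*α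 + (-432)*θ*u^4*a₂₁^2 + (-288)*θ*u^5*a₃ + (192)*θ*u^5*a₃*α + (-13/2)*θ^2*a₃^5 + (-1)*θ^2*a₃^5*α + (-105/2)*θ^2*a₂₁*a₃^4 + (-9)*θ^2*a₂₁*a₃^4*α + (-159)*θ^2*a₂₁^2*a₃^3 + (-30)*θ^2*a₂₁^2*a₃^3*α + (-227)*θ^2*a₂₁^3*a₃^2 + (-46)*θ^2*a₂₁^3*a₃^2*α + (-309/2)*θ^2*a₂₁^4*a₃ + (-33)*θ^2*a₂₁^4*a₃*α + (-81/2)*θ^2*a₂₁^5 + (-9)*θ^2*a₂₁^5*α + (-221/2)*θ^2*u*a₃^4 + (-15)*θ^2*u*a₃^4*α + (-692)*θ^2*u*a₂₁*a₃^3 + (-108)*θ^2*u*a₂₁*a₃^3*α + (-1525)*θ^2*u*a₂₁^2*a₃^2 + (-270)*θ^2*u*a₂₁^2*a₃^2*α + (-1416)*θ^2*u*a₂₁^3*a₃ + (-276)*θ^2*u*a₂₁^3*a₃*α + (-945/2)*θ^2*u*a₂₁^4 + (-99)*θ^2*u*a₂₁^4*α + (-558)*θ^2*u^2*a₃^3 +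 (-46)*θ^2*u^2*a₃^3*α + (-2415)*θ^2*u^2*a₂₁*a₃^2 + (-316)*θ^2*u^2*a₂₁*a₃^2*α + (-3252)*θ^2*u^2*a₂₁^2*a₃ + (-630)*θ^2*u^2*a₂₁^2*a₃*α + (-1395)*θ^2*u^2*a₂₁^3 + (-360)*θ^2*u^2*a₂₁^3*α + (-1050)*θ^2*u^3*a₃^2 + (44)*θ^2*u^3*a₃^2*α + (-2430)*θ^2*u^3*a₂₁*a₃ + (-252)*θ^2*u^3*a₂₁*a₃*α + (-1188)*θ^2*u^3*a₂₁^2 + (-504)*θ^2*u^3*a₂₁^2*α + (-648)*θ^2*u^4*a₃ + (168)*θ^2*u^4*a₃*α + (-216)*θ^2*u^4*a₂₁ + (-216)*θ^2*u^4*a₂₁*α + (-67/4)*θ^3*a₃^4 + (-13/2)*θ^3*a₃^4*α + (-104)*θ^3*a₂₁*a₃^3 + (-46)*θ^3*a₂₁*a₃^3*α + (-455/2)*θ^3*a₂₁^2*a₃^2 + (-113)*θ^3*a₂₁^2*a₃^2*α + (-210)*θ^3*a₂₁^3*a₃ + (-114)*θ^3*a₂₁^3*a₃*α + (-279/4)*θ^3*a₂₁^4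 + (-81/2)*θ^3*a₂₁^4*α + (-379/2)*θ^3*u*a₃^3 + (-77)*θ^3*u*a₃^3*α + (-1681/2)*θ^3*u*a₂₁*a₃^2 + (-407)*θ^3*u*a₂₁*a₃^2*α + (-2337/2)*θ^3*u*a₂₁^2*a₃ + (-663)*θ^3*u*a₂₁^2*a₃*α + (-1035/2)*θ^3*u*a₂₁^3 + (-333)*θ^3*u*a₂₁^3*α + (-603)*θ^3*u^2*a₃^2 + (-254)*θ^3*u^2*a₃^2*α + (-1548)*θ^3*u^2*a₂₁*a₃ + (-972)*θ^3*u^2*a₂₁*a₃*α + (-909)*θ^3*u^2*a₂₁^2 + (-846)*θ^3*u^2*a₂₁^2*α + (-558)*θ^3*u^3*a₃ + (-276)*θ^3*u^3*a₃*α + (-360)*θ^3*u^3*a₂₁ + (-720)*θ^3*u^3*a₂₁*α + (-144)*θ^3*u^4*α + (-171/8)*θ^4*a₃^3 + (-67/4)*θ^4*a₃^3*α + (-753/8)*θ^4*a₂₁*a₃^2 + (-349/4)*θ^4*a₂₁*a₃^2*α + (-1041/8)*θ^4*a₂₁^2*a₃ + (-561/4)*θ^4*a₂₁^2*a₃*α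 + (-459/8)*θ^4*a₂₁^3 + (-279/4)*θ^4*a₂₁^3*α + (-150)*θ^4*u*a₃^2 + (-587/4)*θ^4*u*a₃^2*α + (-402)*θ^4*u*a₂₁*a₃ + (-1011/2)*θ^4*u*a₂₁*a₃*α + (-252)*θ^4*u*a₂₁^2 + (-1611/4)*θ^4*u*a₂₁^2*α + (-459/2)*θ^4*u^2*a₃ + (-705/2)*θ^4*u^2*a₃*α + (-405/2)*θ^4*u^2*a₂₁ + (-1269/2)*θ^4*u^2*a₂₁*α + (-252)*θ^4*u^3*α + (-27/2)*θ^5*a₃^2 + (-171/8)*θ^5*a₃^2*α + (-36)*θ^5*a₂₁*a₃ + (-291/4)*θ^5*a₂₁*a₃*α + (-45/2)*θ^5*a₂₁^2 + (-459/8)*θ^5*a₂₁^2*α + (-45)*θ^5*u*a₃ + (-123)*θ^5*u*a₃*α + (-45)*θ^5*u*a₂₁ + (-207)*θ^5*u*a₂₁*α + (-153)*θ^5*u^2*α + (-27/8)*θ^6*a₃ + (-27/2)*θ^6*a₃*α + (-27/8)*θ^6*a₂₁ + (-45/2)*θ^6*a₂₁*α + (-153/4)*θ^6*u*α + (-27/8)*θ^7*α)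 * hE23 +
      ((4)*u^2*a₃^5 + (28)*u^2*a₂₁*a₃^4 + (72)*u^2*a₂₁^2*a₃^3 + (88)*u^2*a₂₁^3*a₃^2 + (52)*u^2*a₂₁^4*a₃ + (12)*u^2*a₂₁^5 + (40)*u^3*a₃^4 + (216)*u^3*a₂₁*a₃^3 + (408)*u^3*a₂₁^2*a₃^2 + (328)*u^3*a₂₁^3*a₃ + (96)*u^3*a₂₁^4 + (120)*u^4*a₃^3 + (456)*u^4*a₂₁*a₃^2 + (552)*u^4*a₂₁^2*a₃ + (216)*u^4*a₂₁^3 + (112)*u^5*a₃^2 + (256)*u^5*a₂₁*a₃ + (144)*u^5*a₂₁^2 + (2)*θ*u*a₃^5 + (14)*θ*u*a₂₁*a₃^4 + (36)*θ*u*a₂₁^2*a₃^3 + (44)*θ*u*a₂₁^3*a₃^2 + (26)*θ*u*a₂₁^4*a₃ + (6)*θ*u*a₂₁^5 + (48)*θ*u^2*a₃^4 + (264)*θ*u^2*a₂₁*a₃^3 + (504)*θ*u^2*a₂₁^2*a₃^2 + (408)*θ*u^2*a₂₁^3*a₃ + (120)*θ*u^2*a₂₁^4 + (288)*θ*u^3*a₃^3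 + (1152)*θ*u^3*a₂₁*a₃^2 + (1440)*θ*u^3*a₂₁^2*a₃ + (576)*θ*u^3*a₂₁^3 + (592)*θ*u^4*a₃^2 + (1504)*θ*u^4*a₂₁*a₃ + (912)*θ*u^4*a₂₁^2 + (368)*θ*u^5*a₃ + (432)*θ*u^5*a₂₁ + (12)*θ^2*u*a₃^4 + (66)*θ^2*u*a₂₁*a₃^3 + (126)*θ^2*u*a₂₁^2*a₃^2 + (102)*θ^2*u*a₂₁^3*a₃ + (30)*θ^2*u*a₂₁^4 + (171)*θ^2*u^2*a₃^3 + (693)*θ^2*u^2*a₂₁*a₃^2 + (873)*θ^2*u^2*a₂₁^2*a₃ + (351)*θ^2*u^2*a₂₁^3 + (684)*θ^2*u^3*a₃^2 + (1800)*θ^2*u^3*a₂₁*a₃ + (1116)*θ^2*u^3*a₂₁^2 + (900)*θ^2*u^4*a₃ + (1140)*θ^2*u^4*a₂₁ + (288)*θ^2*u^5 + (57/2)*θ^3*u*a₃^3 + (231/2)*θ^3*u*a₂₁*a₃^2 + (291/2)*θ^3*u*a₂₁^2*a₃ + (117/2)*θ^3*u*a₂₁^3 + (268)*θ^3*u^2*a₃^2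 + (712)*θ^3*u^2*a₂₁*a₃ + (444)*θ^3*u^2*a₂₁^2 + (670)*θ^3*u^3*a₃ + (870)*θ^3*u^3*a₂₁ + (432)*θ^3*u^4 + (67/2)*θ^4*u*a₃^2 + (89)*θ^4*u*a₂₁*a₃ + (111/2)*θ^4*u*a₂₁^2 + (195)*θ^4*u^2*a₃ + (255)*θ^4*u^2*a₂₁ + (234)*θ^4*u^3 + (39/2)*θ^5*u*a₃ + (51/2)*θ^5*u*a₂₁ + (54)*θ^5*u^2 + (9/2)*θ^6*u) * hE31 +
      ((2)*u*a₃^6 + (20)*u*a₂₁*a₃^5 + (78)*u*a₂₁^2*a₃^4 + (152)*u*a₂₁^3*a₃^3 + (158)*u*a₂₁^4*a₃^2 + (84)*u*a₂₁^5*a₃ + (18)*u*a₂₁^6 + (24)*u^2*a₃^5 + (192)*u^2*a₂₁*a₃^4 + (576)*u^2*a₂₁^2*a₃^3 + (816)*u^2*a₂₁^3*a₃^2 + (552)*u^2*a₂₁^4*a₃ + (144)*u^2*a₂₁^5 + (104)*u^3*a₃^4 + (616)*u^3*a₂₁*a₃^3 + (1280)*u^3*a₂₁^2*a₃^2 + (1128)*u^3*a₂₁^3*a₃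 + (360)*u^3*a₂₁^4 + (200)*u^4*a₃^3 + (776)*u^4*a₂₁*a₃^2 + (936)*u^4*a₂₁^2*a₃ + (360)*u^4*a₂₁^3 + (144)*u^5*a₃^2 + (288)*u^5*a₂₁*a₃ + (144)*u^5*a₂₁^2 + (1)*θ*a₃^6 + (10)*θ*a₂₁*a₃^5 + (39)*θ*a₂₁^2*a₃^4 + (76)*θ*a₂₁^3*a₃^3 + (79)*θ*a₂₁^4*a₃^2 + (42)*θ*a₂₁^5*a₃ + (9)*θ*a₂₁^6 + (28)*θ*u*a₃^5 + (228)*θ*u*a₂₁*a₃^4 + (696)*θ*u*a₂₁^2*a₃^3 + (1000)*θ*u*a₂₁^3*a₃^2 + (684)*θ*u*a₂₁^4*a₃ + (180)*θ*u*a₂₁^5 + (212)*θ*u^2*a₃^4 + (1324)*θ*u^2*a₂₁*a₃^3 + (2912)*θ*u^2*a₂₁^2*a₃^2 + (2700)*θ*u^2*a₂₁^3*a₃ + (900)*θ*u^2*a₂₁^4 + (660)*θ*u^3*a₃^3 + (2868)*θ*u^3*a₂₁*a₃^2 + (3900)*θ*u^3*a₂₁^2*a₃ + (1692)*θ*u^3*a₂₁^3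 + (904)*θ*u^4*a₃^2 + (2304)*θ*u^4*a₂₁*a₃ + (1368)*θ*u^4*a₂₁^2 + (432)*θ*u^5*a₃ + (432)*θ*u^5*a₂₁ + (7)*θ^2*a₃^5 + (57)*θ^2*a₂₁*a₃^4 + (174)*θ^2*a₂₁^2*a₃^3 + (250)*θ^2*a₂₁^3*a₃^2 + (171)*θ^2*a₂₁^4*a₃ + (45)*θ^2*a₂₁^5 + (120)*θ^2*u*a₃^4 + (762)*θ^2*u*a₂₁*a₃^3 + (1704)*θ^2*u*a₂₁^2*a₃^2 + (1602)*θ^2*u*a₂₁^3*a₃ + (540)*θ^2*u*a₂₁^4 + (641)*θ^2*u^2*a₃^3 + (2921)*θ^2*u^2*a₂₁*a₃^2 + (4179)*θ^2*u^2*a₂₁^2*a₃ + (1899)*θ^2*u^2*a₂₁^3 + (1398)*θ^2*u^3*a₃^2 + (3936)*θ^2*u^3*a₂₁*a₃ + (2610)*θ^2*u^3*a₂₁^2 + (1224)*θ^2*u^4*a₃ + (1512)*θ^2*u^4*a₂₁ + (288)*θ^2*u^5 + (20)*θ^3*a₃^4 + (127)*θ^3*a₂₁*a₃^3 + (284)*θ^3*a₂₁^2*a₃^2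 + (267)*θ^3*a₂₁^3*a₃ + (90)*θ^3*a₂₁^4 + (238)*θ^3*u*a₃^3 + (1102)*θ^3*u*a₂₁*a₃^2 + (1602)*θ^3*u*a₂₁^2*a₃ + (738)*θ^3*u*a₂₁^3 + (878)*θ^3*u^2*a₃^2 + (2586)*θ^3*u^2*a₂₁*a₃ + (1800)*θ^3*u^2*a₂₁^2 + (1206)*θ^3*u^3*a₃ + (1638)*θ^3*u^3*a₂₁ + (504)*θ^3*u^4 + (119/4)*θ^4*a₃^3 + (551/4)*θ^4*a₂₁*a₃^2 + (801/4)*θ^4*a₂₁^2*a₃ + (369/4)*θ^4*a₂₁^3 + (1935/8)*θ^4*u*a₃^2 + (2895/4)*θ^4*u*a₂₁*a₃ + (4095/8)*θ^4*u*a₂₁^2 + (2223/4)*θ^4*u^2*a₃ + (3159/4)*θ^4*u^2*a₂₁ + (360)*θ^4*u^3 + (387/16)*θ^5*a₃^2 + (579/8)*θ^5*a₂₁*a₃ + (819/16)*θ^5*a₂₁^2 + (243/2)*θ^5*u*a₃ + (351/2)*θ^5*u*a₂₁ + (261/2)*θ^5*u^2 + (81/8)*θ^6*a₃ + (117/8)*θ^6*a₂₁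 + (189/8)*θ^6*u + (27/16)*θ^7) * hE32 +
      ((-8)*u^3*a₃^4 + (-64)*u^3*a₂₁*a₃^3 + (-176)*u^3*a₂₁^2*a₃^2 + (-192)*u^3*a₂₁^3*a₃ + (-72)*u^3*a₂₁^4 + (-40)*u^4*a₃^3 + (-232)*u^4*a₂₁*a₃^2 + (-408)*u^4*a₂₁^2*a₃ + (-216)*u^4*a₂₁^3 + (-48)*u^5*a₃^2 + (-192)*u^5*a₂₁*a₃ + (-144)*u^5*a₂₁^2 + (-8)*θ*u^2*a₃^4 + (-64)*θ*u^2*a₂₁*a₃^3 + (-176)*θ*u^2*a₂₁^2*a₃^2 + (-192)*θ*u^2*a₂₁^3*a₃ + (-72)*θ*u^2*a₂₁^4 + (-100)*θ*u^3*a₃^3 + (-580)*θ*u^3*a₂₁*a₃^2 + (-1020)*θ*u^3*a₂₁^2*a₃ + (-540)*θ*u^3*a₂₁^3 + (-296)*θ*u^4*a₃^2 + (-1104)*θ*u^4*a₂₁*a₃ + (-936)*θ*u^4*a₂₁^2 + (-240)*θ*u^5*a₃ + (-432)*θ*u^5*a₂₁ + (-2)*θ^2*u*a₃^4 + (-16)*θ^2*u*a₂₁*a₃^3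 + (-44)*θ^2*u*a₂₁^2*a₃^2 + (-48)*θ^2*u*a₂₁^3*a₃ + (-18)*θ^2*u*a₂₁^4 + (-60)*θ^2*u^2*a₃^3 + (-348)*θ^2*u^2*a₂₁*a₃^2 + (-612)*θ^2*u^2*a₂₁^2*a₃ + (-324)*θ^2*u^2*a₂₁^3 + (-370)*θ^2*u^3*a₃^2 + (-1380)*θ^2*u^3*a₂₁*a₃ + (-1170)*θ^2*u^3*a₂₁^2 + (-660)*θ^2*u^4*a₃ + (-1188)*θ^2*u^4*a₂₁ + (-288)*θ^2*u^5 + (-10)*θ^3*u*a₃^3 + (-58)*θ^3*u*a₂₁*a₃^2 + (-102)*θ^3*u*a₂₁^2*a₃ + (-54)*θ^3*u*a₂₁^3 + (-148)*θ^3*u^2*a₃^2 + (-552)*θ^3*u^2*a₂₁*a₃ + (-468)*θ^3*u^2*a₂₁^2 + (-510)*θ^3*u^3*a₃ + (-918)*θ^3*u^3*a₂₁ + (-432)*θ^3*u^4 + (-37/2)*θ^4*u*a₃^2 + (-69)*θ^4*u*a₂₁*a₃ + (-117/2)*θ^4*u*a₂₁^2 + (-150)*θ^4*u^2*a₃ +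 (-270)*θ^4*u^2*a₂₁ + (-234)*θ^4*u^3 + (-15)*θ^5*u*a₃ + (-27)*θ^5*u*a₂₁ + (-54)*θ^5*u^2 + (-9/2)*θ^6*u) * hE33 +
      ((-8)*u^4*a₃^3 + (-40)*u^4*a₂₁*a₃^2 + (-56)*u^4*a₂₁^2*a₃ + (-24)*u^4*a₂₁^3 + (-16)*u^5*a₃^2 + (-64)*u^5*a₂₁*a₃ + (-48)*u^5*a₂₁^2 + (-8)*θ*u^3*a₃^3 + (-40)*θ*u^3*a₂₁*a₃^2 + (-56)*θ*u^3*a₂₁^2*a₃ + (-24)*θ*u^3*a₂₁^3 + (-64)*θ*u^4*a₃^2 + (-208)*θ*u^4*a₂₁*a₃ + (-144)*θ*u^4*a₂₁^2 + (-80)*θ*u^5*a₃ + (-144)*θ*u^5*a₂₁ + (-2)*θ^2*u^2*a₃^3 + (-10)*θ^2*u^2*a₂₁*a₃^2 + (-14)*θ^2*u^2*a₂₁^2*a₃ + (-6)*θ^2*u^2*a₂₁^3 + (-42)*θ^2*u^3*a₃^2 + (-132)*θ^2*u^3*a₂₁*a₃ + (-90)*θ^2*u^3*a₂₁^2 + (-148)*θ^2*u^4*a₃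 + (-228)*θ^2*u^4*a₂₁ + (-96)*θ^2*u^5 + (-7)*θ^3*u^2*a₃^2 + (-22)*θ^3*u^2*a₂₁*a₃ + (-15)*θ^3*u^2*a₂₁^2 + (-64)*θ^3*u^3*a₃ + (-96)*θ^3*u^3*a₂₁ + (-96)*θ^3*u^4 + (-8)*θ^4*u^2*a₃ + (-12)*θ^4*u^2*a₂₁ + (-30)*θ^4*u^3 + (-3)*θ^5*u^2) * hE34 +
      ((2)*u*a₃^6 + (20)*u*a₂₁*a₃^5 + (78)*u*a₂₁^2*a₃^4 + (152)*u*a₂₁^3*a₃^3 + (158)*u*a₂₁^4*a₃^2 + (84)*u*a₂₁^5*a₃ + (18)*u*a₂₁^6 + (28)*u^2*a₃^5 + (228)*u^2*a₂₁*a₃^4 + (696)*u^2*a₂₁^2*a₃^3 + (1000)*u^2*a₂₁^3*a₃^2 + (684)*u^2*a₂₁^4*a₃ + (180)*u^2*a₂₁^5 + (136)*u^3*a₃^4 + (848)*u^3*a₂₁*a₃^3 + (1864)*u^3*a₂₁^2*a₃^2 + (1728)*u^3*a₂₁^3*a₃ + (576)*u^3*a₂₁^4 + (272)*u^4*a₃^3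 + (1184)*u^4*a₂₁*a₃^2 + (1632)*u^4*a₂₁^2*a₃ + (720)*u^4*a₂₁^3 + (192)*u^5*a₃^2 + (480)*u^5*a₂₁*a₃ + (288)*u^5*a₂₁^2 + (1)*θ*a₃^6 + (10)*θ*a₂₁*a₃^5 + (39)*θ*a₂₁^2*a₃^4 + (76)*θ*a₂₁^3*a₃^3 + (79)*θ*a₂₁^4*a₃^2 + (42)*θ*a₂₁^5*a₃ + (9)*θ*a₂₁^6 + (32)*θ*u*a₃^5 + (264)*θ*u*a₂₁*a₃^4 + (816)*θ*u*a₂₁^2*a₃^3 + (1184)*θ*u*a₂₁^3*a₃^2 + (816)*θ*u*a₂₁^4*a₃ + (216)*θ*u*a₂₁^5 + (280)*θ*u^2*a₃^4 + (1808)*θ*u^2*a₂₁*a₃^3 + (4108)*θ*u^2*a₂₁^2*a₃^2 + (3912)*θ*u^2*a₂₁^3*a₃ + (1332)*θ*u^2*a₂₁^4 + (976)*θ*u^3*a₃^3 + (4552)*θ*u^3*a₂₁*a₃^2 + (6672)*θ*u^3*a₂₁^2*a₃ + (3096)*θ*u^3*a₂₁^3 + (1408)*θ*u^4*a₃^2 +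 (4128)*θ*u^4*a₂₁*a₃ + (2880)*θ*u^4*a₂₁^2 + (672)*θ*u^5*a₃ + (864)*θ*u^5*a₂₁ + (8)*θ^2*a₃^5 + (66)*θ^2*a₂₁*a₃^4 + (204)*θ^2*a₂₁^2*a₃^3 + (296)*θ^2*a₂₁^3*a₃^2 + (204)*θ^2*a₂₁^4*a₃ + (54)*θ^2*a₂₁^5 + (159)*θ^2*u*a₃^4 + (1038)*θ^2*u*a₂₁*a₃^3 + (2382)*θ^2*u*a₂₁^2*a₃^2 + (2286)*θ^2*u*a₂₁^3*a₃ + (783)*θ^2*u*a₂₁^4 + (988)*θ^2*u^2*a₃^3 + (4738)*θ^2*u^2*a₂₁*a₃^2 + (7116)*θ^2*u^2*a₂₁^2*a₃ + (3366)*θ^2*u^2*a₂₁^3 + (2442)*θ^2*u^3*a₃^2 + (7560)*θ^2*u^3*a₂₁*a₃ + (5526)*θ^2*u^3*a₂₁^2 + (2316)*θ^2*u^4*a₃ + (3420)*θ^2*u^4*a₂₁ + (576)*θ^2*u^5 + (53/2)*θ^3*a₃^4 + (173)*θ^3*a₂₁*a₃^3 + (397)*θ^3*a₂₁^2*a₃^2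 + (381)*θ^3*a₂₁^3*a₃ + (261/2)*θ^3*a₂₁^4 + (372)*θ^3*u*a₃^3 + (1800)*θ^3*u*a₂₁*a₃^2 + (2724)*θ^3*u*a₂₁^2*a₃ + (1296)*θ^3*u*a₂₁^3 + (1622)*θ^3*u^2*a₃^2 + (5130)*θ^3*u^2*a₂₁*a₃ + (3816)*θ^3*u^2*a₂₁^2 + (2586)*θ^3*u^3*a₃ + (3978)*θ^3*u^3*a₂₁ + (1224)*θ^3*u^4 + (93/2)*θ^4*a₃^3 + (225)*θ^4*a₂₁*a₃^2 + (681/2)*θ^4*a₂₁^2*a₃ + (162)*θ^4*a₂₁^3 + (3645/8)*θ^4*u*a₃^2 + (5805/4)*θ^4*u*a₂₁*a₃ + (8685/8)*θ^4*u*a₂₁^2 + (5073/4)*θ^4*u^2*a₃ + (7929/4)*θ^4*u^2*a₂₁ + (990)*θ^4*u^3 + (729/16)*θ^5*a₃^2 + (1161/8)*θ^5*a₂₁*a₃ + (1737/16)*θ^5*a₂₁^2 + (567/2)*θ^5*u*a₃ + (891/2)*θ^5*u*a₂₁ + (765/2)*θ^5*u^2 + (189/8)*θ^6*a₃ + (297/8)*θ^6*a₂₁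 + (567/8)*θ^6*u + (81/16)*θ^7) * hT1
  have h2 : (0:ℝ) < (α * (1 - α)) * ((1)*θ^2*u*a₃^5 + (9)*θ^2*u*a₂₁*a₃^4 + (30)*θ^2*u*a₂₁^2*a₃^3 + (46)*θ^2*u*a₂₁^3*a₃^2 + (33)*θ^2*u*a₂₁^4*a₃ + (9)*θ^2*u*a₂₁^5 + (18)*θ^2*u^2*a₃^4 + (114)*θ^2*u^2*a₂₁*a₃^3 + (246)*θ^2*u^2*a₂₁^2*a₃^2 + (222)*θ^2*u^2*a₂₁^3*a₃ + (72)*θ^2*u^2*a₂₁^4 + (108)*θ^2*u^3*a₃^3 + (432)*θ^2*u^3*a₂₁*a₃^2 + (468)*θ^2*u^3*a₂₁^2*a₃ + (144)*θ^2*u^3*a₂₁^3 + (248)*θ^2*u^4*a₃^2 + (480)*θ^2*u^4*a₂₁*a₃ + (72)*θ^2*u^4*a₂₁^2 + (192)*θ^2*u^5*a₃ + (6)*θ^3*u*a₃^4 + (39)*θ^3*u*a₂₁*a₃^3 + (87)*θ^3*u*a₂₁^2*a₃^2 + (81)*θ^3*u*a₂₁^3*a₃ + (27)*θ^3*u*a₂₁^4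 + (78)*θ^3*u^2*a₃^3 + (318)*θ^3*u^2*a₂₁*a₃^2 + (366)*θ^3*u^2*a₂₁^2*a₃ + (126)*θ^3*u^2*a₂₁^3 + (300)*θ^3*u^3*a₃^2 + (576)*θ^3*u^3*a₂₁*a₃ + (108)*θ^3*u^3*a₂₁^2 + (336)*θ^3*u^4*a₃ + (53/4)*θ^4*u*a₃^3 + (221/4)*θ^4*u*a₂₁*a₃^2 + (267/4)*θ^4*u*a₂₁^2*a₃ + (99/4)*θ^4*u*a₂₁^3 + (221/2)*θ^4*u^2*a₃^2 + (216)*θ^4*u^2*a₂₁*a₃ + (99/2)*θ^4*u^2*a₂₁^2 + (204)*θ^4*u^3*a₃ + (51/4)*θ^5*u*a₃^2 + (51/2)*θ^5*u*a₂₁*a₃ + (27/4)*θ^5*u*a₂₁^2 + (51)*θ^5*u^2*a₃ + (9/2)*θ^6*u*a₃) :=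
    mul_pos (mul_pos hα₀ (by linarith)) hRpos
  rcases mul_eq_zero.mp hkey with h | h
  · linarith
  · exact absurd h (ne_of_gt h2)
end

section
/- For all real parameters θ > 0, u₁ > 0, u₂ > 0, a₂ ≥ 0, a₂₁ ≥ 0, a₃ ≥ 0, a₂₁₁ ≥ 0, a₂₂ ≥ 0, a₃₁ ≥ 0, a₄ ≥ 0 and any reals α, M₂₀, M₁₁, M₀₂, M₃₀, M₂₁, M₁₂, M₀₃, the fourth-moment system (E41)–(E45) has a unique solution (M₄₀, M₃₁, M₂₂, M₁₃, M₀₄) ∈ ℝ⁵; equivalently, the 5×5 coefficient matrix of the system is invertible. -/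
/-!
The coefficient matrix of (E41)–(E45) has nonpositive off-diagonal entries, and its row sums
`6a₂₁₁ + 3a₂₂ + 4a₃₁ + a₄ + 2θ`, `a₃ + 3a₂₁ + 2θ`, `2a₂ + 2θ`, `a₃ + 3a₂₁ + 2θ`,
`6a₂₁₁ + 3a₂₂ + 4a₃₁ + a₄ + 2θ` are positive: the `u₁`, `u₂` terms cancel in every row. Such a
matrix is strictly diagonally dominant, hence invertible by the Levy–Desplanques theorem.
-/

open Matrix

theorem Matrix.existsUnique_mulVec_eq_of_det_ne_zero {n K : Type*} [Fintype n] [DecidableEq n]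
    [Field K] {A : Matrix n n K} (hA : A.det ≠ 0) (b : n → K) : ∃! x, A *ᵥ x = b :=
  have hunit : IsUnit A := (isUnit_iff_isUnit_det A).2 hA.isUnit
  (show Function.Bijective A.mulVec from
    ⟨mulVec_injective_iff_isUnit.2 hunit, mulVec_surjective_iff_isUnit.2 hunit⟩).existsUnique b

theorem Matrix.det_ne_zero_of_offDiag_nonpos_of_sum_row_pos {n : Type*} [Fintype n]
    [DecidableEq n] {A : Matrix n n ℝ} (hoff : ∀ i j, i ≠ j → A i j ≤ 0)
    (hrow : ∀ i, 0 < ∑ j, A i j) : A.det ≠ 0 := by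
  refine det_ne_zero_of_sum_row_lt_diag fun k ↦ ?_
  calc ∑ j ∈ Finset.univ.erase k, ‖A k j‖ = -∑ j ∈ Finset.univ.erase k, A k j := by
        rw [← Finset.sum_neg_distrib]
        refine Finset.sum_congr rfl fun j hj ↦ ?_
        rw [Real.norm_of_nonpos (hoff k j (Finset.ne_of_mem_erase hj).symm)]
    _ < A k k := by
        have := hrow k
        rw [← Finset.add_sum_erase _ _ (Finset.mem_univ k)] at this
        linarith
    _ ≤ ‖A k k‖ := Real.le_norm_self _

def fiveTupleEquivFin (α : Type*) : α × α × α × α × α ≃ (Fin 5 → α) where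
  toFun M := ![M.1, M.2.1, M.2.2.1, M.2.2.2.1, M.2.2.2.2]
  invFun v := (v 0, v 1, v 2, v 3, v 4)
  left_inv _ := rfl
  right_inv v := by ext i; fin_cases i <;> rfl

theorem fiveTupleEquivFin_apply {α : Type*} (M : α × α × α × α × α) :
    fiveTupleEquivFin α M = ![M.1, M.2.1, M.2.2.1, M.2.2.2.1, M.2.2.2.2] :=
  rfl

def fourthMomentMatrix (θ u₁ u₂ a₂ a₂₁ a₃ a₂₁₁ a₂₂ a₃₁ a₄ : ℝ) : Matrix (Fin 5) (Fin 5) ℝ :=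
  !![4 * u₂ + 6 * a₂₁₁ + 3 * a₂₂ + 4 * a₃₁ + a₄ + 2 * θ, -4 * u₂, 0, 0, 0;
     -u₁, a₃ + 3 * a₂₁ + 2 * θ + 3 * u₂ + u₁, -3 * u₂, 0, 0;
     0, -2 * u₁, 2 * a₂ + 2 * θ + 2 * u₂ + 2 * u₁, -2 * u₂, 0;
     0, 0, -3 * u₁, 2 * θ + u₂ + 3 * u₁ + 3 * a₂₁ + a₃, -u₂;
     0, 0, 0, -4 * u₁, 6 * a₂₁₁ + 3 * a₂₂ + 4 * a₃₁ + a₄ + 2 * θ + 4 * u₁]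

theorem fourthMomentMatrix_det_ne_zero {θ u₁ u₂ a₂ a₂₁ a₃ a₂₁₁ a₂₂ a₃₁ a₄ : ℝ}
    (hθ : 0 < θ) (hu₁ : 0 < u₁) (hu₂ : 0 < u₂)
    (ha₂ : 0 ≤ a₂) (ha₂₁ : 0 ≤ a₂₁) (ha₃ : 0 ≤ a₃)
    (ha₂₁₁ : 0 ≤ a₂₁₁) (ha₂₂ : 0 ≤ a₂₂) (ha₃₁ : 0 ≤ a₃₁) (ha₄ : 0 ≤ a₄) :
    (fourthMomentMatrix θ u₁ u₂ a₂ a₂₁ a₃ a₂₁₁ a₂₂ a₃₁ a₄).det ≠ 0 := by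
  refine det_ne_zero_of_offDiag_nonpos_of_sum_row_pos (fun i j hij ↦ ?_) fun i ↦ ?_
  · fin_cases i <;> fin_cases j <;> simp [fourthMomentMatrix] at hij ⊢ <;> linarith
  · fin_cases i <;> simp [fourthMomentMatrix, Fin.sum_univ_five] <;> linarith

theorem fourthMomentMatrix_mulVec (θ u₁ u₂ a₂ a₂₁ a₃ a₂₁₁ a₂₂ a₃₁ a₄ x₀ x₁ x₂ x₃ x₄ : ℝ) :
    fourthMomentMatrix θ u₁ u₂ a₂ a₂₁ a₃ a₂₁₁ a₂₂ a₃₁ a₄ *ᵥ ![x₀, x₁, x₂, x₃, x₄] =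
      ![(4 * u₂ + 6 * a₂₁₁ + 3 * a₂₂ + 4 * a₃₁ + a₄ + 2 * θ) * x₀ - 4 * u₂ * x₁,
        -u₁ * x₀ + (a₃ + 3 * a₂₁ + 2 * θ + 3 * u₂ + u₁) * x₁ - 3 * u₂ * x₂,
        -2 * u₁ * x₁ + (2 * a₂ + 2 * θ + 2 * u₂ + 2 * u₁) * x₂ - 2 * u₂ * x₃,
        -3 * u₁ * x₂ + (2 * θ + u₂ + 3 * u₁ + 3 * a₂₁ + a₃) * x₃ - u₂ * x₄,
        -4 * u₁ * x₃ + (6 * a₂₁₁ + 3 * a₂₂ + 4 * a₃₁ + a₄ + 2 * θ + 4 * u₁) * x₄] := by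
  ext i
  fin_cases i <;> simp [fourthMomentMatrix, mulVec, dotProduct, Fin.sum_univ_five] <;> ring

/-- The fourth-moment system (E41)–(E45) has a unique solution
`(M₄₀, M₃₁, M₂₂, M₁₃, M₀₄) ∈ ℝ⁵` for all θ > 0, u₁ > 0, u₂ > 0 and
nonnegative coalescence rates, with arbitrary real `α` and lower-order
moments. -/
theorem fourth_moment_system_unique_solution
    (θ u₁ u₂ a₂ a₂₁ a₃ a₂₁₁ a₂₂ a₃₁ a₄ α M₂₀ M₁₁ M₀₂ M₃₀ M₂₁ M₁₂ M₀₃ : ℝ)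
    (hθ : 0 < θ) (hu₁ : 0 < u₁) (hu₂ : 0 < u₂)
    (ha₂ : 0 ≤ a₂) (ha₂₁ : 0 ≤ a₂₁) (ha₃ : 0 ≤ a₃)
    (ha₂₁₁ : 0 ≤ a₂₁₁) (ha₂₂ : 0 ≤ a₂₂) (ha₃₁ : 0 ≤ a₃₁) (ha₄ : 0 ≤ a₄) :
    ∃! M : ℝ × ℝ × ℝ × ℝ × ℝ,
      (4 * u₂ + 6 * a₂₁₁ + 3 * a₂₂ + 4 * a₃₁ + a₄ + 2 * θ) * M.1
          - 4 * u₂ * M.2.1 =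
        (2 * θ * α + 6 * a₂₁₁) * M₃₀ + (3 * a₂₂ + 4 * a₃₁) * M₂₀ + a₄ * α ∧
      -u₁ * M.1 + (a₃ + 3 * a₂₁ + 2 * θ + 3 * u₂ + u₁) * M.2.1
          - 3 * u₂ * M.2.2.1 =
        (3 * a₂₁ + (3 / 2) * θ * α) * M₂₁ + a₃ * M₁₁ + (θ * α / 2) * M₃₀ ∧
      -2 * u₁ * M.2.1 + (2 * a₂ + 2 * θ + 2 * u₂ + 2 * u₁) * M.2.2.1
          - 2 * u₂ * M.2.2.2.1 =
        (θ * α + a₂) * M₁₂ + (θ * α + a₂) * M₂₁ ∧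
      -3 * u₁ * M.2.2.1 + (2 * θ + u₂ + 3 * u₁ + 3 * a₂₁ + a₃) * M.2.2.2.1
          - u₂ * M.2.2.2.2 =
        (θ * α / 2) * M₀₃ + (3 * a₂₁ + (3 / 2) * θ * α) * M₁₂ + a₃ * M₁₁ ∧
      -4 * u₁ * M.2.2.2.1
          + (6 * a₂₁₁ + 3 * a₂₂ + 4 * a₃₁ + a₄ + 2 * θ + 4 * u₁) * M.2.2.2.2 =
        (2 * θ * α + 6 * a₂₁₁) * M₀₃ + (3 * a₂₂ + 4 * a₃₁) * M₀₂ + a₄ * α := by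
  refine ((fiveTupleEquivFin ℝ).existsUnique_congr fun M ↦ ?_).2
    (existsUnique_mulVec_eq_of_det_ne_zero
      (fourthMomentMatrix_det_ne_zero hθ hu₁ hu₂ ha₂ ha₂₁ ha₃ ha₂₁₁ ha₂₂ ha₃₁ ha₄)
      ![(2 * θ * α + 6 * a₂₁₁) * M₃₀ + (3 * a₂₂ + 4 * a₃₁) * M₂₀ + a₄ * α,
        (3 * a₂₁ + (3 / 2) * θ * α) * M₂₁ + a₃ * M₁₁ + (θ * α / 2) * M₃₀,
        (θ * α + a₂) * M₁₂ + (θ * α + a₂) * M₂₁,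
        (θ * α / 2) * M₀₃ + (3 * a₂₁ + (3 / 2) * θ * α) * M₁₂ + a₃ * M₁₁,
        (2 * θ * α + 6 * a₂₁₁) * M₀₃ + (3 * a₂₂ + 4 * a₃₁) * M₀₂ + a₄ * α])
  rw [fiveTupleEquivFin_apply, fourthMomentMatrix_mulVec]
  simp
end
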